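/- For every (λ_1,…,λ_p) ∈ (0,∞)^p, E(max_{1≤j≤p} M(I_j)^{λ_j}) = ℓ(b_1,…,b_d) / (1 + ℓ(b_1,…,b_d)), where b_i = σ_i^η λ_{j(i)}^η for each i ∈ I. -/

import Mathlib

open MeasureTheory ProbabilityTheory Real Filter Topology
open scoped ProbabilityTheory

noncomputable section

/-- Marginal Fréchet-type distribution function `F_i(t) = exp(-σ t^(-1/η))` for `t > 0`. -/
def margF (σ η t : ℝ) : ℝ := if 0 < t then Real.exp (-σ * t ^ (-1 / η)) else 0

/-- Joint distribution function of the random vector `X`. -/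
def jointF {Ω : Type*} [MeasureSpace Ω] {d : ℕ} (X : Fin d → Ω → ℝ) (t : Fin d → ℝ) : ℝ :=
  (ℙ {ω | ∀ i, X i ω ≤ t i}).toReal

/-- Exponent function `ℓ(t) = -ln F_X(t)`. -/
def expo {Ω : Type*} [MeasureSpace Ω] {d : ℕ} (X : Fin d → Ω → ℝ) (t : Fin d → ℝ) : ℝ :=
  -Real.log (jointF X t)

/-- Block maximum `M(I_j) = max_{i ∈ I_j} F_i(X_i)`, where `I_j = {i | B i = j}`. -/
def blockMax {Ω : Type*} [MeasureSpace Ω] {d p : ℕ} (B : Fin d → Fin p) (σ : Fin d → ℝ)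
    (η : ℝ) (X : Fin d → Ω → ℝ) (j : Fin p) (ω : Ω) : ℝ :=
  sSup ((fun i => margF (σ i) η (X i ω)) '' {i | B i = j})

/-- Extremal dependence function
`ε(λ₁,…,λ_p) = E(max_j M(I_j)^(λ_j)) / (1 - E(max_j M(I_j)^(λ_j)))`. -/
def epsFun {Ω : Type*} [MeasureSpace Ω] {d p : ℕ} (B : Fin d → Fin p) (σ : Fin d → ℝ)
    (η : ℝ) (X : Fin d → Ω → ℝ) (l : Fin p → ℝ) : ℝ :=
  (∫ ω, ⨆ j, blockMax B σ η X j ω ^ l j ∂ℙ) /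
    (1 - ∫ ω, ⨆ j, blockMax B σ η X j ω ^ l j ∂ℙ)

/-- Single-block extremal dependence function `ε_{I_j}(λ)`. -/
def epsBlock {Ω : Type*} [MeasureSpace Ω] {d p : ℕ} (B : Fin d → Fin p) (σ : Fin d → ℝ)
    (η : ℝ) (X : Fin d → Ω → ℝ) (j : Fin p) (l : ℝ) : ℝ :=
  (∫ ω, blockMax B σ η X j ω ^ l ∂ℙ) / (1 - ∫ ω, blockMax B σ η X j ω ^ l ∂ℙ)


/-! `Y = max_j M(I_j)^{λ_j}` takes values in `[0, 1]`. For `0 < u < 1` put `c = (-log u)^{-η}`;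
then `F_i(c b_i) = u^{1/λ_{j(i)}}`, so the event `Y ≤ u` is exactly `X ≤ c b`, and homogeneity
of `ℓ` gives `P(X ≤ c b) = exp(-c^{-1/η} ℓ(b)) = u^{ℓ(b)}`. Hence `Y` has distribution function
`u ↦ u^L` on `[0, 1]` with `L = ℓ(b)`, and `E Y = ∫₀¹ (1 - u^L) du = L / (1 + L)`. -/

lemma margF_nonneg (σ η x : ℝ) : 0 ≤ margF σ η x := by
  unfold margF
  split_ifs
  exacts [(Real.exp_pos _).le, le_rfl]

lemma measurable_margF (σ η : ℝ) : Measurable (margF σ η) :=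
  Measurable.ite measurableSet_Ioi (by fun_prop) measurable_const

section Marginal

variable {σ η : ℝ}

lemma margF_le_one (hσ : 0 ≤ σ) (x : ℝ) : margF σ η x ≤ 1 := by
  unfold margF
  split_ifs with hx
  · have : 0 ≤ σ * x ^ (-1 / η) := mul_nonneg hσ (Real.rpow_nonneg hx.le _)
    exact Real.exp_le_one_iff.mpr (by linarith)
  · exact zero_le_one

lemma margF_le_margF_iff (hσ : 0 < σ) (hη : 0 < η) {x t : ℝ} (ht : 0 < t) :
    margF σ η x ≤ margF σ η t ↔ x ≤ t := by
  by_cases hx : 0 < x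
  · have hexp : -1 / η < 0 := div_neg_of_neg_of_pos (by norm_num) hη
    rw [margF, margF, if_pos hx, if_pos ht, Real.exp_le_exp, neg_mul, neg_mul, neg_le_neg_iff,
      mul_le_mul_iff_right₀ hσ, Real.rpow_le_rpow_iff_of_neg ht hx hexp]
  · rw [margF, if_neg hx]
    exact iff_of_true (margF_nonneg σ η t) ((not_lt.mp hx).trans ht.le)

lemma margF_neg_log_rpow_mul (hσ : 0 < σ) (hη : 0 < η) {u lam : ℝ} (hu0 : 0 < u) (hu1 : u < 1)
    (hlam : 0 < lam) :
    margF σ η ((-Real.log u) ^ (-η) * (σ ^ η * lam ^ η)) = u ^ lam⁻¹ := by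
  have hlog : 0 < -Real.log u := neg_pos.mpr (Real.log_neg hu0 hu1)
  have harg : (-Real.log u) ^ (-η) * (σ ^ η * lam ^ η) = ((-Real.log u)⁻¹ * σ * lam) ^ η := by
    rw [Real.mul_rpow (by positivity) hlam.le, Real.mul_rpow (by positivity) hσ.le,
      Real.inv_rpow hlog.le, Real.rpow_neg hlog.le]
    ring
  have hpos : 0 < (-Real.log u)⁻¹ * σ * lam := by positivity
  rw [harg, margF, if_pos (Real.rpow_pos_of_pos hpos _), ← Real.rpow_mul hpos.le,
    show η * (-1 / η) = -1 by field_simp, Real.rpow_neg_one, Real.rpow_def_of_pos hu0]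
  congr 1
  field_simp

end Marginal

section BlockMax

variable {Ω : Type*} [MeasureSpace Ω] {d p : ℕ} (B : Fin d → Fin p) (σ : Fin d → ℝ) (η : ℝ)
  (X : Fin d → Ω → ℝ)

def maxBlockMaxRpow (l : Fin p → ℝ) (ω : Ω) : ℝ := ⨆ j, blockMax B σ η X j ω ^ l j

variable {B σ η X}

lemma blockMax_nonneg (j : Fin p) (ω : Ω) : 0 ≤ blockMax B σ η X j ω :=
  Real.sSup_nonneg (by rintro _ ⟨i, -, rfl⟩; exact margF_nonneg _ _ _)

lemma blockMax_le_one (hσ : ∀ i, 0 ≤ σ i) (j : Fin p) (ω : Ω) :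
    blockMax B σ η X j ω ≤ 1 :=
  Real.sSup_le (by rintro _ ⟨i, -, rfl⟩; exact margF_le_one (hσ i) _) zero_le_one

lemma blockMax_le_iff {v : ℝ} (hv : 0 ≤ v) (j : Fin p) (ω : Ω) :
    blockMax B σ η X j ω ≤ v ↔ ∀ i, B i = j → margF (σ i) η (X i ω) ≤ v := by
  unfold blockMax
  refine ⟨fun h i hi => (le_csSup (Set.toFinite _).bddAbove ?_).trans h,
    fun h => Real.sSup_le (by rintro _ ⟨i, hi, rfl⟩; exact h i hi) hv⟩
  exact Set.mem_image_of_mem (fun i => margF (σ i) η (X i ω)) hi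

lemma measurable_blockMax (hX : ∀ i, Measurable (X i)) (j : Fin p) :
    Measurable (blockMax B σ η X j) := by
  unfold blockMax
  rw [funext fun ω => sSup_image']
  exact Measurable.iSup fun i => (measurable_margF _ _).comp (hX i)

variable {l : Fin p → ℝ}

lemma maxBlockMaxRpow_nonneg (ω : Ω) : 0 ≤ maxBlockMaxRpow B σ η X l ω :=
  Real.iSup_nonneg fun j => Real.rpow_nonneg (blockMax_nonneg j ω) _

lemma maxBlockMaxRpow_le_one (hσ : ∀ i, 0 ≤ σ i) (hl : ∀ j, 0 ≤ l j) (ω : Ω) :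
    maxBlockMaxRpow B σ η X l ω ≤ 1 :=
  Real.iSup_le (fun j => Real.rpow_le_one (blockMax_nonneg j ω)
    (blockMax_le_one hσ j ω) (hl j)) zero_le_one

lemma measurable_maxBlockMaxRpow (hX : ∀ i, Measurable (X i)) :
    Measurable (maxBlockMaxRpow B σ η X l) :=
  Measurable.iSup fun j => (measurable_blockMax hX j).pow_const _

lemma maxBlockMaxRpow_le_iff (hl : ∀ j, 0 < l j) {u : ℝ} (hu : 0 ≤ u) (ω : Ω) :
    maxBlockMaxRpow B σ η X l ω ≤ u ↔ ∀ i, margF (σ i) η (X i ω) ≤ u ^ (l (B i))⁻¹ := by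
  have hbdd : BddAbove (Set.range fun j => blockMax B σ η X j ω ^ l j) :=
    (Set.finite_range _).bddAbove
  have hpow : ∀ j, blockMax B σ η X j ω ^ l j ≤ u ↔ blockMax B σ η X j ω ≤ u ^ (l j)⁻¹ :=
    fun j => (Real.le_rpow_inv_iff_of_pos (blockMax_nonneg j ω) hu (hl j)).symm
  calc maxBlockMaxRpow B σ η X l ω ≤ u ↔ ∀ j, blockMax B σ η X j ω ^ l j ≤ u :=
        ⟨fun h j => (le_ciSup hbdd j).trans h, fun h => Real.iSup_le h hu⟩
    _ ↔ ∀ j, ∀ i, B i = j → margF (σ i) η (X i ω) ≤ u ^ (l j)⁻¹ := by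
        simp_rw [hpow, blockMax_le_iff (Real.rpow_nonneg hu _)]
    _ ↔ ∀ i, margF (σ i) η (X i ω) ≤ u ^ (l (B i))⁻¹ :=
        ⟨fun h i => h _ i rfl, fun h j i hi => by subst hi; exact h i⟩

end BlockMax

section Distribution

variable {Ω : Type*} [MeasureSpace Ω] {d : ℕ} {X : Fin d → Ω → ℝ}

lemma expo_nonneg [IsProbabilityMeasure (ℙ : Measure Ω)] (X : Fin d → Ω → ℝ) (t : Fin d → ℝ) :
    0 ≤ expo X t :=
  neg_nonneg.mpr (Real.log_nonpos measureReal_nonneg measureReal_le_one)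

lemma jointF_neg_log_rpow_mul {η : ℝ} (hη : 0 < η)
    (hpos : ∀ t : Fin d → ℝ, (∀ i, 0 < t i) → 0 < jointF X t)
    (hhom : ∀ c : ℝ, 0 < c → ∀ t : Fin d → ℝ, (∀ i, 0 < t i) →
      expo X (fun i => c * t i) = c ^ (-1 / η) * expo X t)
    {t : Fin d → ℝ} (ht : ∀ i, 0 < t i) {u : ℝ} (hu0 : 0 < u) (hu1 : u < 1) :
    jointF X (fun i => (-Real.log u) ^ (-η) * t i) = u ^ expo X t := by
  have hlog : 0 < -Real.log u := neg_pos.mpr (Real.log_neg hu0 hu1)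
  have hc : 0 < (-Real.log u) ^ (-η) := Real.rpow_pos_of_pos hlog _
  have hcpow : ((-Real.log u) ^ (-η)) ^ (-1 / η) = -Real.log u := by
    rw [← Real.rpow_mul hlog.le, show -η * (-1 / η) = 1 by field_simp, Real.rpow_one]
  have hexpo := hhom _ hc t ht
  rw [hcpow] at hexpo
  calc jointF X (fun i => (-Real.log u) ^ (-η) * t i)
      = Real.exp (-expo X (fun i => (-Real.log u) ^ (-η) * t i)) := by
        rw [expo, neg_neg, Real.exp_log (hpos _ fun i => mul_pos hc (ht i))]
    _ = u ^ expo X t := by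
        rw [hexpo, Real.rpow_def_of_pos hu0]
        ring_nf

variable {p : ℕ} {B : Fin d → Fin p} {σ : Fin d → ℝ} {η : ℝ} {l : Fin p → ℝ}

lemma setOf_maxBlockMaxRpow_le (hσ : ∀ i, 0 < σ i) (hη : 0 < η) (hl : ∀ j, 0 < l j) {u : ℝ}
    (hu0 : 0 < u) (hu1 : u < 1) :
    {ω | maxBlockMaxRpow B σ η X l ω ≤ u} =
      {ω | ∀ i, X i ω ≤ (-Real.log u) ^ (-η) * (σ i ^ η * l (B i) ^ η)} := by
  ext ω
  simp only [Set.mem_ofPred_eq, maxBlockMaxRpow_le_iff hl hu0.le]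
  refine forall_congr' fun i => ?_
  rw [← margF_neg_log_rpow_mul (hσ i) hη hu0 hu1 (hl (B i))]
  have hlog : 0 < -Real.log u := neg_pos.mpr (Real.log_neg hu0 hu1)
  exact margF_le_margF_iff (hσ i) hη (mul_pos (Real.rpow_pos_of_pos hlog _)
    (mul_pos (Real.rpow_pos_of_pos (hσ i) η) (Real.rpow_pos_of_pos (hl (B i)) η)))

lemma measureReal_maxBlockMaxRpow_le (hσ : ∀ i, 0 < σ i) (hη : 0 < η) (hl : ∀ j, 0 < l j)
    (hpos : ∀ t : Fin d → ℝ, (∀ i, 0 < t i) → 0 < jointF X t)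
    (hhom : ∀ c : ℝ, 0 < c → ∀ t : Fin d → ℝ, (∀ i, 0 < t i) →
      expo X (fun i => c * t i) = c ^ (-1 / η) * expo X t)
    {u : ℝ} (hu0 : 0 < u) (hu1 : u < 1) :
    (ℙ : Measure Ω).real {ω | maxBlockMaxRpow B σ η X l ω ≤ u} =
      u ^ expo X (fun i => σ i ^ η * l (B i) ^ η) := by
  rw [setOf_maxBlockMaxRpow_le hσ hη hl hu0 hu1]
  exact jointF_neg_log_rpow_mul hη hpos hhom
    (fun i => mul_pos (Real.rpow_pos_of_pos (hσ i) η) (Real.rpow_pos_of_pos (hl (B i)) η)) hu0 hu1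

end Distribution

lemma integral_eq_div_one_add_of_measureReal_le_eq_rpow {Ω : Type*} [MeasurableSpace Ω]
    {μ : Measure Ω} [IsProbabilityMeasure μ] {Y : Ω → ℝ} (hY : Measurable Y)
    (hY0 : ∀ ω, 0 ≤ Y ω) (hY1 : ∀ ω, Y ω ≤ 1) {L : ℝ} (hL : 0 ≤ L)
    (hcdf : ∀ u, 0 < u → u < 1 → μ.real {ω | Y ω ≤ u} = u ^ L) :
    ∫ ω, Y ω ∂μ = L / (1 + L) := by
  have hint : Integrable Y μ := (integrable_const (1 : ℝ)).mono' hY.aestronglyMeasurable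
    (ae_of_all _ fun ω => by rw [Real.norm_eq_abs, abs_of_nonneg (hY0 ω)]; exact hY1 ω)
  have htail : Set.EqOn (fun t => μ.real {ω | t < Y ω})
      ((Set.Ioo (0 : ℝ) 1).indicator fun t => 1 - t ^ L) (Set.Ioi 0) := by
    intro t (ht : 0 < t)
    dsimp only
    rcases lt_or_ge t 1 with ht1 | ht1
    · rw [Set.indicator_of_mem (Set.mem_Ioo.mpr ⟨ht, ht1⟩), ← hcdf t ht ht1,
        ← probReal_compl_eq_one_sub (measurableSet_le hY measurable_const), Set.compl_ofPred]
      simp only [not_le]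
    · have hempty : {ω | t < Y ω} = ∅ :=
        Set.eq_empty_of_forall_notMem fun ω (h : t < Y ω) => ((hY1 ω).trans ht1).not_gt h
      rw [Set.indicator_of_notMem fun h => ht1.not_gt h.2, hempty, measureReal_empty]
  rw [hint.integral_eq_integral_meas_lt (ae_of_all _ hY0), setIntegral_congr_fun measurableSet_Ioi
    htail, setIntegral_indicator measurableSet_Ioo,
    Set.inter_eq_self_of_subset_right Set.Ioo_subset_Ioi_self, ← integral_Ioc_eq_integral_Ioo,
    ← intervalIntegral.integral_of_le zero_le_one, intervalIntegral.integral_sub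
      intervalIntegrable_const (intervalIntegral.intervalIntegrable_rpow (Or.inl hL)),
    intervalIntegral.integral_const, integral_rpow (Or.inl (by linarith)), Real.one_rpow,
    Real.zero_rpow (by linarith)]
  field_simp
  ring

theorem statement3_general
    {Ω : Type*} [MeasureSpace Ω] [IsProbabilityMeasure (ℙ : Measure Ω)]
    {d p : ℕ}
    (X : Fin d → Ω → ℝ) (hX : ∀ i, Measurable (X i))
    (σ : Fin d → ℝ) (hσ : ∀ i, 0 < σ i)
    (η : ℝ) (hη0 : 0 < η)
    (hpos : ∀ t : Fin d → ℝ, (∀ i, 0 < t i) → 0 < jointF X t)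
    (hhom : ∀ c : ℝ, 0 < c → ∀ t : Fin d → ℝ, (∀ i, 0 < t i) →
      expo X (fun i => c * t i) = c ^ (-1 / η) * expo X t)
    (B : Fin d → Fin p)
    (l : Fin p → ℝ) (hl : ∀ j, 0 < l j) :
    (∫ ω, ⨆ j, blockMax B σ η X j ω ^ l j ∂ℙ) =
      expo X (fun i => σ i ^ η * l (B i) ^ η) /
        (1 + expo X (fun i => σ i ^ η * l (B i) ^ η)) :=
  integral_eq_div_one_add_of_measureReal_le_eq_rpow (measurable_maxBlockMaxRpow hX)
    maxBlockMaxRpow_nonneg (maxBlockMaxRpow_le_one (fun i => (hσ i).le) fun j => (hl j).le)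
    (expo_nonneg X _) fun _ hu0 hu1 => measureReal_maxBlockMaxRpow_le hσ hη0 hl hpos hhom hu0 hu1

theorem statement3
    {Ω : Type*} [MeasureSpace Ω] [IsProbabilityMeasure (ℙ : Measure Ω)]
    {d p : ℕ} (hd : 0 < d) (hp : 0 < p)
    (X : Fin d → Ω → ℝ) (hX : ∀ i, Measurable (X i))
    (σ : Fin d → ℝ) (hσ : ∀ i, 0 < σ i)
    (η : ℝ) (hη0 : 0 < η) (hη1 : η ≤ 1)
    (hmarg : ∀ i, ∀ t : ℝ, 0 < t →
      ℙ {ω | X i ω ≤ t} = ENNReal.ofReal (Real.exp (-σ i * t ^ (-1 / η))))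
    (hpos : ∀ t : Fin d → ℝ, (∀ i, 0 < t i) → 0 < jointF X t)
    (hhom : ∀ c : ℝ, 0 < c → ∀ t : Fin d → ℝ, (∀ i, 0 < t i) →
      expo X (fun i => c * t i) = c ^ (-1 / η) * expo X t)
    (B : Fin d → Fin p) (hB : Function.Surjective B)
    (l : Fin p → ℝ) (hl : ∀ j, 0 < l j) :
    (∫ ω, ⨆ j, blockMax B σ η X j ω ^ l j ∂ℙ) =
      expo X (fun i => σ i ^ η * l (B i) ^ η) /
        (1 + expo X (fun i => σ i ^ η * l (B i) ^ η)) :=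
  statement3_general X hX σ hσ η hη0 hpos hhom B l hl
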